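/- Let n ≥ 1, let σ be a congruence on P_n^Φ, and let i ∈ ℕ. Then the relation σ_{1i} := {(α,β) ∈ D_1 × D_1 : ((i,α),(i,β)) ∈ σ} is one of the following seven relations on D_1: the equality relation; μ↑ := {(α,β) : α̂ = β̂ and α R β}; μ↓ := {(α,β) : α̂ = β̂ and α L β}; {(α,β) : α̂ = β̂}; {(α,β) : α̂ R β̂}; {(α,β) : α̂ L β̂}; or the full relation D_1 × D_1. -/

import Mathlib

namespace TPM

/-- Vertex set `{1,…,n} ∪ {1',…,n'}`: `Sum.inl` = unprimed (upper row),
`Sum.inr` = primed (lower row). -/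
abbrev V (n : ℕ) := Fin n ⊕ Fin n

/-- The partition monoid `P_n`: set partitions of the `2n`-element set `V n`,
encoded as equivalence relations (setoids). -/
abbrev PM (n : ℕ) := Setoid (V n)

/-- Three-row vertex set of the product graph: top / middle / bottom. -/
abbrev W (n : ℕ) := Fin n ⊕ (Fin n ⊕ Fin n)

variable {n : ℕ}

/-- First factor: unprimed ↦ top, primed ↦ middle. -/
def topMid : V n → W n
  | Sum.inl i => Sum.inl i
  | Sum.inr i => Sum.inr (Sum.inl i)

/-- Second factor: unprimed ↦ middle, primed ↦ bottom. -/
def midBot : V n → W n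
  | Sum.inl i => Sum.inr (Sum.inl i)
  | Sum.inr i => Sum.inr (Sum.inr i)

/-- Embedding of `V n` as top and bottom rows of the three-row set. -/
def topBot : V n → W n
  | Sum.inl i => Sum.inl i
  | Sum.inr i => Sum.inr (Sum.inr i)

/-- Edge relation of the product graph `Γ(α,β)`. -/
def graphRel (α β : PM n) (x y : W n) : Prop :=
  (∃ u v : V n, α.r u v ∧ x = topMid u ∧ y = topMid v) ∨
  (∃ u v : V n, β.r u v ∧ x = midBot u ∧ y = midBot v)

/-- Connectivity (equivalence closure of the edge relation) in `Γ(α,β)`. -/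
def conn (α β : PM n) : W n → W n → Prop := Relation.EqvGen (graphRel α β)

/-- Connectivity in `Γ(α,β)`, as a setoid on the three-row vertex set. -/
def connSetoid (α β : PM n) : Setoid (W n) :=
  ⟨conn α β, Relation.EqvGen.is_equivalence _⟩

/-- The product of two partitions: `x,y` lie in the same block of `αβ` iff they are
connected in `Γ(α,β)`. -/
def pmul (α β : PM n) : PM n :=
  ⟨fun x y => conn α β (topBot x) (topBot y),
    ⟨fun _ => Relation.EqvGen.refl _, fun h => Relation.EqvGen.symm _ _ h, fun h h' => Relation.EqvGen.trans _ _ _ h h'⟩⟩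

/-- A vertex of the three-row set lies in the middle row. -/
def isMid (x : W n) : Prop := ∃ i : Fin n, x = Sum.inr (Sum.inl i)

/-- `Φ(α,β)`: the number of floating components of `Γ(α,β)`, i.e. connected components
all of whose vertices lie in the middle row. -/
noncomputable def Phi (α β : PM n) : ℕ :=
  Nat.card {c : Quotient (connSetoid α β) //
    ∀ x : W n, Quotient.mk (connSetoid α β) x = c → isMid x}

/-- The rank of a partition: the number of transversal blocks (blocks containing both an
unprimed and a primed element). -/
noncomputable def rnk (α : PM n) : ℕ :=
  Nat.card {c : Quotient α //
    (∃ i : Fin n, Quotient.mk α (Sum.inl i) = c) ∧ ∃ i : Fin n, Quotient.mk α (Sum.inr i) = c}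

/-- Which row of `V n` a point lies in. -/
def side : V n → Bool
  | Sum.inl _ => true
  | Sum.inr _ => false

/-- `α̂`: split each transversal of `α` into its unprimed part and its primed part. -/
def hat (α : PM n) : PM n :=
  ⟨fun x y => α.r x y ∧ side x = side y,
    ⟨fun x => ⟨α.iseqv.refl x, rfl⟩,
     fun h => ⟨α.iseqv.symm h.1, h.2.symm⟩,
     fun h h' => ⟨α.iseqv.trans h.1 h'.1, h.2.trans h'.2⟩⟩⟩

/-- The twisted product on `ℕ × P_n`:  `(i,α)(j,β) = (i + j + Φ(α,β), αβ)`. -/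
noncomputable def tmul (a b : ℕ × PM n) : ℕ × PM n :=
  (a.1 + b.1 + Phi a.2 b.2, pmul a.2 b.2)

/-- A congruence on a set equipped with a binary operation: an equivalence relation
compatible with the operation on both sides. -/
def IsCongruence {M : Type*} (mul : M → M → M) (σ : M → M → Prop) : Prop :=
  Equivalence σ ∧ ∀ x y a, σ x y → σ (mul a x) (mul a y) ∧ σ (mul x a) (mul y a)

/-- Green's relation `R`: equality of the right ideals `xM = yM`. -/
def greenR {M : Type*} (mul : M → M → M) (x y : M) : Prop :=
  Set.range (mul x) = Set.range (mul y)

/-- Green's relation `L`: `Mx = My`. -/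
def greenL {M : Type*} (mul : M → M → M) (x y : M) : Prop :=
  Set.range (fun a => mul a x) = Set.range (fun a => mul a y)

/-- The principal two-sided ideal `MxM`. -/
def jSet {M : Type*} (mul : M → M → M) (x : M) : Set M :=
  Set.range (fun p : M × M => mul (mul p.1 x) p.2)

/-- Green's relation `J`: `MxM = MyM`. -/
def greenJ {M : Type*} (mul : M → M → M) (x y : M) : Prop :=
  jSet mul x = jSet mul y

/-- Green's relation `H = R ∩ L`. -/
def greenH {M : Type*} (mul : M → M → M) (x y : M) : Prop :=
  greenR mul x y ∧ greenL mul x y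

/-- Green's relation `D = R ∘ L`. -/
def greenD {M : Type*} (mul : M → M → M) (x y : M) : Prop :=
  ∃ z, greenR mul x z ∧ greenL mul z y

/-- `pd(α,β)` satisfies `P`, where `α` has `p` transversals: there are representatives
`a s` of the upper parts of the `p` (pairwise distinct) transversals of `α`, with `b s`
representing the corresponding lower parts, and a permutation `π` with `P π` such that the
block of `β` containing `a s` contains `b (π s)`.  (For H-related `α, β ∈ D_p` this says
exactly that some representation of the permutational difference `pd(α,β)` satisfies `P`.) -/
def pdIn (p : ℕ) (P : Equiv.Perm (Fin p) → Prop) (α β : PM n) : Prop :=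
  ∃ (a b : Fin p → Fin n) (π : Equiv.Perm (Fin p)),
    (∀ s t, α.r (Sum.inl (a s)) (Sum.inl (a t)) → s = t) ∧
    (∀ s, α.r (Sum.inl (a s)) (Sum.inr (b s))) ∧
    (∀ s, β.r (Sum.inl (a s)) (Sum.inr (b (π s)))) ∧
    P π

/-- The relation `ν_N` on `D_p`, for a subgroup `N ≤ S_p`:  H-related pairs of rank-`p`
partitions whose permutational difference lies in `N`. -/
def nuRel (p : ℕ) (N : Subgroup (Equiv.Perm (Fin p))) (α β : PM n) : Prop :=
  rnk α = p ∧ rnk β = p ∧ greenH pmul α β ∧ pdIn p (· ∈ N) α β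

/-- The congruence `(m, m+d)^♯` on the additive monoid `ℕ` (intended for `d ≥ 1`). -/
def natCong (m d : ℕ) (i j : ℕ) : Prop :=
  i = j ∨ (m ≤ i ∧ m ≤ j ∧ i % d = j % d)

/-- `min θ ≤ i` for a congruence `θ` on `ℕ` (with `min Δ_ℕ = ∞`). -/
def minLE (θ : ℕ → ℕ → Prop) (i : ℕ) : Prop :=
  ∃ a b, θ a b ∧ a ≠ b ∧ a ≤ i

/-- `k ≤ min θ` for a congruence `θ` on `ℕ` (with `min Δ_ℕ = ∞`). -/
def leMin (k : ℕ) (θ : ℕ → ℕ → Prop) : Prop :=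
  ∀ a b, θ a b → a ≠ b → k ≤ a

/-- The possible entries of a C-matrix. -/
inductive CEntry : Type
  | delta | muUp | muDown | mu | lam | rho | R
  | nsym (q : ℕ) (N : Subgroup (Equiv.Perm (Fin q)))

/-- Whether a C-matrix entry is an N-symbol. -/
def isNsym : CEntry → Prop
  | CEntry.nsym _ _ => True
  | _ => False

/-- The allowed values of the symbol `ζ` in row types RT2, RT5, RT6. -/
def isZeta (e : CEntry) : Prop :=
  e = CEntry.mu ∨ e = CEntry.muUp ∨ e = CEntry.muDown ∨ e = CEntry.delta

/-- The allowed values of the symbol `ξ` in row types RT4–RT7: any of `μ,ρ,λ,R` if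
`d = 1`, and only `μ` if `d > 1`. -/
def xiOK (d : ℕ) (e : CEntry) : Prop :=
  e = CEntry.mu ∨ (d = 1 ∧ (e = CEntry.rho ∨ e = CEntry.lam ∨ e = CEntry.R))

/-- Row type RT1 for rows 0 and 1: all entries `Δ`. -/
def RT1 (M0 M1 : ℕ → CEntry) : Prop :=
  (∀ i, M0 i = CEntry.delta) ∧ (∀ i, M1 i = CEntry.delta)

/-- Row type RT2. -/
def RT2 (Θ0 Θ1 : ℕ → ℕ → Prop) (M0 M1 : ℕ → CEntry) : Prop :=
  Θ0 = Eq ∧ Θ1 = Eq ∧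
  ∃ i ζ, isZeta ζ ∧
    (∀ j, j < i → M0 j = CEntry.delta) ∧ (∀ j, i ≤ j → M0 j = CEntry.mu) ∧
    (∀ j, j < i → M1 j = CEntry.delta) ∧ M1 i = ζ ∧ (∀ j, i < j → M1 j = CEntry.mu)

/-- Row type RT3. -/
def RT3 (Θ0 : ℕ → ℕ → Prop) (M0 M1 : ℕ → CEntry) : Prop :=
  ∃ m ξ, Θ0 = natCong m 1 ∧ (ξ = CEntry.rho ∨ ξ = CEntry.lam ∨ ξ = CEntry.R) ∧
    (∀ i, M1 i = CEntry.delta) ∧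
    (∀ j, j < m → M0 j = CEntry.delta) ∧ (∀ j, m ≤ j → M0 j = ξ)

/-- Row type RT4. -/
def RT4 (Θ0 Θ1 : ℕ → ℕ → Prop) (M0 M1 : ℕ → CEntry) : Prop :=
  ∃ m d ξ, 1 ≤ d ∧ Θ0 = natCong m d ∧ Θ1 = natCong m d ∧ xiOK d ξ ∧
    (∀ j, j < m → M0 j = CEntry.delta ∧ M1 j = CEntry.delta) ∧
    (∀ j, m ≤ j → M0 j = ξ ∧ M1 j = ξ)

/-- Row type RT5. -/
def RT5 (Θ0 Θ1 : ℕ → ℕ → Prop) (M0 M1 : ℕ → CEntry) : Prop :=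
  ∃ m d i ξ ζ, 1 ≤ d ∧ i < m ∧ Θ0 = natCong m d ∧ Θ1 = natCong (m + 1) d ∧
    xiOK d ξ ∧ isZeta ζ ∧
    (∀ j, j < i → M0 j = CEntry.delta) ∧ (∀ j, i ≤ j → j < m → M0 j = CEntry.mu) ∧
    (∀ j, m ≤ j → M0 j = ξ) ∧
    (∀ j, j < i → M1 j = CEntry.delta) ∧ M1 i = ζ ∧
    (∀ j, i < j → j ≤ m → M1 j = CEntry.mu) ∧ (∀ j, m < j → M1 j = ξ)

/-- Row type RT6. -/
def RT6 (Θ0 Θ1 : ℕ → ℕ → Prop) (M0 M1 : ℕ → CEntry) : Prop :=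
  ∃ m l d ξ ζ, 1 ≤ d ∧ m < l ∧ Θ0 = natCong m d ∧ Θ1 = natCong l d ∧
    xiOK d ξ ∧ isZeta ζ ∧
    (∀ j, j < m → M0 j = CEntry.delta) ∧ (∀ j, m ≤ j → M0 j = ξ) ∧
    (∀ j, j < l - 1 → M1 j = CEntry.delta) ∧ M1 (l - 1) = ζ ∧ (∀ j, l ≤ j → M1 j = ξ)

/-- Row type RT7. -/
def RT7 (Θ0 Θ1 : ℕ → ℕ → Prop) (M0 M1 : ℕ → CEntry) : Prop :=
  ∃ m l d ξ, 1 ≤ d ∧ 0 < m ∧ m + 1 < l ∧ (l - 1) % d = m % d ∧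
    Θ0 = natCong m d ∧ Θ1 = natCong l d ∧ xiOK d ξ ∧
    (∀ j, j < m - 1 → M0 j = CEntry.delta) ∧ M0 (m - 1) = CEntry.mu ∧
    (∀ j, m ≤ j → M0 j = ξ) ∧
    (∀ j, j < l - 1 → M1 j = CEntry.delta) ∧ M1 (l - 1) = CEntry.mu ∧
    (∀ j, l ≤ j → M1 j = ξ)

/-- Row type RT8 for a row `q ≥ 2`: all entries `Δ`. -/
def RT8 (Mq : ℕ → CEntry) : Prop := ∀ i, Mq i = CEntry.delta

/-- Row type RT9 for a row `q ≥ 2`. -/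
def RT9 (q : ℕ) (Θq : ℕ → ℕ → Prop) (Mq : ℕ → CEntry) : Prop :=
  ∃ (i k : ℕ) (Ns : ℕ → Subgroup (Equiv.Perm (Fin q))),
    i ≤ k ∧ leMin k Θq ∧
    (∀ j, i ≤ j → j ≤ k → Ns j ≠ ⊥ ∧ (Ns j).Normal) ∧
    (∀ j j', i ≤ j → j ≤ j' → j' ≤ k → Ns j ≤ Ns j') ∧
    (∀ j, j < i → Mq j = CEntry.delta) ∧
    (∀ j, i ≤ j → j < k → Mq j = CEntry.nsym q (Ns j)) ∧
    (∀ j, k ≤ j → Mq j = CEntry.nsym q (Ns k))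

/-- Row type RT10 for a row `q ≥ 2`. -/
def RT10 (q : ℕ) (Θq : ℕ → ℕ → Prop) (Mq : ℕ → CEntry) : Prop :=
  ∃ (i m : ℕ) (Ns : ℕ → Subgroup (Equiv.Perm (Fin q))),
    i ≤ m ∧ Θq = natCong m 1 ∧
    (∀ j, i ≤ j → j < m → Ns j ≠ ⊥ ∧ (Ns j).Normal) ∧
    (∀ j j', i ≤ j → j ≤ j' → j' < m → Ns j ≤ Ns j') ∧
    (∀ j, j < i → Mq j = CEntry.delta) ∧
    (∀ j, i ≤ j → j < m → Mq j = CEntry.nsym q (Ns j)) ∧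
    (∀ j, m ≤ j → Mq j = CEntry.R)

/-- A C-pair for `P_n^Φ`: a descending chain `Θ = (θ_0 ⊇ ⋯ ⊇ θ_n)` of congruences on
`(ℕ,+)` together with a matrix `M = (M_{qi})`, `0 ≤ q ≤ n`, `i ∈ ℕ`, whose rows 0 and 1
jointly have one of the types RT1–RT7, whose rows `q ≥ 2` have one of the types RT8–RT10,
and which satisfies the verticality conditions (V1) and (V2). -/
def IsCPair (n : ℕ) (Θ : ℕ → ℕ → ℕ → Prop) (M : ℕ → ℕ → CEntry) : Prop :=
  (∀ q, q ≤ n → IsCongruence (· + ·) (Θ q)) ∧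
  (∀ q r, q ≤ r → r ≤ n → ∀ i j, Θ r i j → Θ q i j) ∧
  (RT1 (M 0) (M 1) ∨ RT2 (Θ 0) (Θ 1) (M 0) (M 1) ∨ RT3 (Θ 0) (M 0) (M 1) ∨
    RT4 (Θ 0) (Θ 1) (M 0) (M 1) ∨ RT5 (Θ 0) (Θ 1) (M 0) (M 1) ∨
    RT6 (Θ 0) (Θ 1) (M 0) (M 1) ∨ RT7 (Θ 0) (Θ 1) (M 0) (M 1)) ∧
  (∀ q, 2 ≤ q → q ≤ n → (RT8 (M q) ∨ RT9 q (Θ q) (M q) ∨ RT10 q (Θ q) (M q))) ∧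
  (∀ q i, 1 ≤ q → q ≤ n → isNsym (M q i) →
    ¬(M (q - 1) i = CEntry.delta ∨ M (q - 1) i = CEntry.muUp ∨
      M (q - 1) i = CEntry.muDown ∨ isNsym (M (q - 1) i))) ∧
  (∀ q i, 2 ≤ q → q ≤ n → M q i = CEntry.R → M (q - 1) i = CEntry.R)

/-- The relation `cg(Θ,M)` on `P_n^Φ` associated with a C-pair `(Θ,M)`: conditions
(C1)–(C8). -/
def cg (n : ℕ) (Θ : ℕ → ℕ → ℕ → Prop) (M : ℕ → ℕ → CEntry)
    (a b : ℕ × PM n) : Prop :=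
  -- (C1)
  (M (rnk a.2) a.1 = CEntry.delta ∧ M (rnk b.2) b.1 = CEntry.delta ∧
    Θ (rnk a.2) a.1 b.1 ∧ a.2 = b.2) ∨
  -- (C2)
  (M (rnk a.2) a.1 = CEntry.R ∧ M (rnk b.2) b.1 = CEntry.R) ∨
  -- (C3)
  (∃ p N, M (rnk a.2) a.1 = CEntry.nsym p N ∧ M (rnk b.2) b.1 = CEntry.nsym p N ∧
    Θ (rnk a.2) a.1 b.1 ∧ rnk a.2 = p ∧ greenH pmul a.2 b.2 ∧ pdIn p (· ∈ N) a.2 b.2) ∨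
  -- (C4)
  (M (rnk a.2) a.1 = CEntry.lam ∧ M (rnk b.2) b.1 = CEntry.lam ∧
    greenL pmul (hat a.2) (hat b.2)) ∨
  -- (C5)
  (M (rnk a.2) a.1 = CEntry.rho ∧ M (rnk b.2) b.1 = CEntry.rho ∧
    greenR pmul (hat a.2) (hat b.2)) ∨
  -- (C6)
  (M (rnk a.2) a.1 = CEntry.muDown ∧ M (rnk b.2) b.1 = CEntry.muDown ∧
    hat a.2 = hat b.2 ∧ greenL pmul a.2 b.2) ∨
  -- (C7)
  (M (rnk a.2) a.1 = CEntry.muUp ∧ M (rnk b.2) b.1 = CEntry.muUp ∧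
    hat a.2 = hat b.2 ∧ greenR pmul a.2 b.2) ∨
  -- (C8)
  (M (rnk a.2) a.1 = CEntry.mu ∧ M (rnk b.2) b.1 = CEntry.mu ∧
    hat a.2 = hat b.2 ∧
    ((rnk a.2 = rnk b.2 ∧ Θ (rnk a.2) a.1 b.1) ∨
     (rnk a.2 ≠ rnk b.2 ∧ Θ 0 (a.1 + rnk b.2) (b.1 + rnk a.2) ∧
        ¬ minLE (Θ (rnk a.2)) a.1 ∧ ¬ minLE (Θ (rnk b.2)) b.1) ∨
     (rnk a.2 ≠ rnk b.2 ∧ Θ 0 (a.1 + rnk b.2) (b.1 + rnk a.2) ∧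
        minLE (Θ (rnk a.2)) a.1 ∧ minLE (Θ (rnk b.2)) b.1)))

/-- The C-pair `(Θ,M)` is exceptional with exceptional row `q`, where
`θ_q = (m, m+2d)^♯`. -/
def ExcAt (n : ℕ) (Θ : ℕ → ℕ → ℕ → Prop) (M : ℕ → ℕ → CEntry) (q m d : ℕ) : Prop :=
  2 ≤ q ∧ q ≤ n ∧ 1 ≤ d ∧ Θ q = natCong m (2 * d) ∧
  ((2 < q ∧ M q m = CEntry.nsym q (alternatingGroup (Fin q))) ∨
   (q = 2 ∧ M 2 m = CEntry.delta ∧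
     (M 1 m = CEntry.mu ∨ M 1 m = CEntry.rho ∨ M 1 m = CEntry.lam ∨ M 1 m = CEntry.R) ∧
     (∀ i j, natCong m d i j → Θ 1 i j)))

/-- The exceptional congruence `cgx(Θ,M)` associated with an exceptional C-pair:
`cg(Θ,M)` together with the pairs of (C9). -/
def cgx (n : ℕ) (Θ : ℕ → ℕ → ℕ → Prop) (M : ℕ → ℕ → CEntry) (q m d : ℕ)
    (a b : ℕ × PM n) : Prop :=
  cg n Θ M a b ∨
  (rnk a.2 = q ∧ rnk b.2 = q ∧ natCong m d a.1 b.1 ∧ ¬ Θ q a.1 b.1 ∧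
    greenH pmul a.2 b.2 ∧ pdIn q (fun π => π ∉ alternatingGroup (Fin q)) a.2 b.2)

/-- The Rees relation of a subset `I`. -/
def rees {M : Type*} (I : Set M) (x y : M) : Prop := x = y ∨ (x ∈ I ∧ y ∈ I)

/-- A (possibly empty) ideal of `P_n^Φ`: `MIM ⊆ I`. -/
def tIdeal (n : ℕ) (I : Set (ℕ × PM n)) : Prop :=
  ∀ a b x, x ∈ I → tmul (tmul a x) b ∈ I

/-- `I(σ)`: the union of all ideals `I` of `P_n^Φ` whose Rees congruence is contained
in `σ`. -/
def Isig (n : ℕ) (σ : (ℕ × PM n) → (ℕ × PM n) → Prop) : Set (ℕ × PM n) :=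
  ⋃₀ {I | tIdeal n I ∧ ∀ x y, rees I x y → σ x y}

/-- The 0-twisted partition monoid `P_{n,0}^Φ`, carried by `Option (P_n)` with
`none` the zero element `✗`. -/
noncomputable def mul0 (a b : Option (PM n)) : Option (PM n) :=
  match a, b with
  | some α, some β => if Phi α β = 0 then some (pmul α β) else none
  | _, _ => none

/-- `rank a ≤ q`, where `rank ✗ = -∞`. -/
def rnkLE (a : Option (PM n)) (q : ℕ) : Prop :=
  ∀ α, a = some α → rnk α ≤ q

/-- The Rees congruence `R_q` on `P_{n,0}^Φ`. -/
def ReesQ (q : ℕ) (a b : Option (PM n)) : Prop :=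
  a = b ∨ (rnkLE a q ∧ rnkLE b q)

/-- Lift a relation on `P_n` to `P_{n,0}^Φ = P_n ∪ {✗}`. -/
def lift2 (r : PM n → PM n → Prop) (a b : Option (PM n)) : Prop :=
  ∃ α β, a = some α ∧ b = some β ∧ r α β

/-!
A rank-one partition is `rankOne P Q a b`: upper blocks `P`, lower blocks `Q`, and a single
transversal through the `P`-class of `a` and the `Q`-class of `b`. Multiplying a pair `(α, β)` of
`σ` at level `i` on the right by a partition `δ` with `Φ(α,δ) = Φ(β,δ) = 0` (or dually on the
left) gives another pair at level `i`. Multiplying by a funnel (one block on the side facing the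
pair, one transversal) resets the lower data of a pair, or dually the upper data, at will, and
two-block multipliers can merge two lower classes or kill the transversal on one side of the pair
only. Consequently a pair of `σ_{1i}` with different lower blocks forces every pair with equal
upper blocks (`α̂ R β̂`), one with different upper blocks forces every pair with equal lower blocks
(`α̂ L β̂`), and, when `α̂ = β̂` throughout, a pair that is not `L`-related forces `μ↑` and one
that is not `R`-related forces `μ↓`. Which of these four kinds of pairs occur determines which
of the seven relations `σ_{1i}` is.
-/
abbrev topV (i : Fin n) : W n := .inl i
abbrev midV (i : Fin n) : W n := .inr (.inl i)
abbrev botV (i : Fin n) : W n := .inr (.inr i)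

def upper (α : PM n) : Setoid (Fin n) := α.comap Sum.inl

def lower (α : PM n) : Setoid (Fin n) := α.comap Sum.inr

def cross (α : PM n) (i j : Fin n) : Prop := α.r (.inl i) (.inr j)

def rankOne (P Q : Setoid (Fin n)) (a b : Fin n) : PM n where
  r
    | .inl i, .inl j => P.r i j
    | .inr i, .inr j => Q.r i j
    | .inl i, .inr j => P.r i a ∧ Q.r j b
    | .inr i, .inl j => P.r j a ∧ Q.r i b
  iseqv := by
    constructor
    · rintro (i | i) <;> exact Setoid.refl' _ i
    · rintro (i | i) (j | j) <;> grind [Setoid.symm']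
    · rintro (i | i) (j | j) (k | k) <;> grind [Setoid.symm', Setoid.trans']

def rankZero (P Q : Setoid (Fin n)) : PM n where
  r
    | .inl i, .inl j => P.r i j
    | .inr i, .inr j => Q.r i j
    | _, _ => False
  iseqv := by
    constructor
    · rintro (i | i) <;> exact Setoid.refl' _ i
    · rintro (i | i) (j | j) <;> grind [Setoid.symm']
    · rintro (i | i) (j | j) (k | k) <;> grind [Setoid.trans']

section RankOne

variable {P Q P' Q' : Setoid (Fin n)} {a b a' b' i j : Fin n}

@[simp] lemma rankOne_inl_inl : (rankOne P Q a b).r (.inl i) (.inl j) ↔ P.r i j := Iff.rfl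
@[simp] lemma rankOne_inr_inr : (rankOne P Q a b).r (.inr i) (.inr j) ↔ Q.r i j := Iff.rfl
@[simp] lemma rankOne_inl_inr :
    (rankOne P Q a b).r (.inl i) (.inr j) ↔ P.r i a ∧ Q.r j b := Iff.rfl
@[simp] lemma rankOne_inr_inl :
    (rankOne P Q a b).r (.inr i) (.inl j) ↔ P.r j a ∧ Q.r i b := Iff.rfl
@[simp] lemma rankZero_inl_inl : (rankZero P Q).r (.inl i) (.inl j) ↔ P.r i j := Iff.rfl
@[simp] lemma rankZero_inr_inr : (rankZero P Q).r (.inr i) (.inr j) ↔ Q.r i j := Iff.rfl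
@[simp] lemma rankZero_inl_inr : ¬ (rankZero P Q).r (.inl i) (.inr j) := id
@[simp] lemma rankZero_inr_inl : ¬ (rankZero P Q).r (.inr i) (.inl j) := id

@[simp] lemma upper_apply (α : PM n) : (upper α).r i j ↔ α.r (.inl i) (.inl j) := Iff.rfl
@[simp] lemma lower_apply (α : PM n) : (lower α).r i j ↔ α.r (.inr i) (.inr j) := Iff.rfl
@[simp] lemma hat_apply (α : PM n) (x y : V n) : (hat α).r x y ↔ α.r x y ∧ side x = side y :=
  Iff.rfl

@[simp] lemma upper_rankOne : upper (rankOne P Q a b) = P := rfl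
@[simp] lemma lower_rankOne : lower (rankOne P Q a b) = Q := rfl
@[simp] lemma upper_rankZero : upper (rankZero P Q) = P := rfl
@[simp] lemma lower_rankZero : lower (rankZero P Q) = Q := rfl

lemma rankOne_congr (ha : P.r a a') (hb : Q.r b b') : rankOne P Q a b = rankOne P Q a' b' := by
  ext (i | i) (j | j) <;> simp <;> grind [Setoid.symm', Setoid.trans']

lemma rankOne_eq_rankOne_iff :
    rankOne P Q a b = rankOne P' Q' a' b' ↔ P = P' ∧ Q = Q' ∧ P.r a a' ∧ Q.r b b' := by
  constructor
  · intro h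
    have hab := congrArg (fun γ : PM n => γ.r (.inl a) (.inr b)) h
    simp only [rankOne_inl_inr, Setoid.refl', and_self, eq_iff_iff, true_iff] at hab
    obtain rfl : P = P' := by simpa using congrArg upper h
    obtain rfl : Q = Q' := by simpa using congrArg lower h
    exact ⟨rfl, rfl, hab⟩
  · rintro ⟨rfl, rfl, ha, hb⟩
    exact rankOne_congr ha hb

lemma rankZero_eq_rankZero_iff : rankZero P Q = rankZero P' Q' ↔ P = P' ∧ Q = Q' := by
  constructor
  · intro h
    exact ⟨by simpa using congrArg upper h, by simpa using congrArg lower h⟩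
  · rintro ⟨rfl, rfl⟩
    rfl

lemma rankOne_ne_rankZero : rankOne P Q a b ≠ rankZero P' Q' := fun h => by
  simpa using congrArg (fun γ : PM n => γ.r (.inl a) (.inr b)) h

lemma hat_eq_rankZero (α : PM n) : hat α = rankZero (upper α) (lower α) := by
  ext (i | i) (j | j) <;> simp [side]

lemma hat_eq_hat_iff {α β : PM n} :
    hat α = hat β ↔ upper α = upper β ∧ lower α = lower β := by
  rw [hat_eq_rankZero, hat_eq_rankZero, rankZero_eq_rankZero_iff]

end RankOne

section Rank

lemma rnk_eq_one_iff {α : PM n} :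
    rnk α = 1 ↔ (∃ a b, cross α a b) ∧
      ∀ a b a' b', cross α a b → cross α a' b' → α.r (.inl a) (.inl a') := by
  rw [rnk, Nat.card_eq_one_iff_unique]
  constructor
  · rintro ⟨hsub, ⟨⟨c, ⟨a, ha⟩, ⟨b, hb⟩⟩⟩⟩
    refine ⟨⟨a, b, Quotient.exact (ha.trans hb.symm)⟩, 
      fun a₁ b₁ a₂ b₂ h₁ h₂ => ?_⟩
    exact Quotient.exact <| congrArg Subtype.val <| hsub.allEq
      ⟨_, ⟨a₁, rfl⟩, ⟨b₁, Quotient.sound (α.symm' h₁)⟩⟩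
      ⟨_, ⟨a₂, rfl⟩, ⟨b₂, Quotient.sound (α.symm' h₂)⟩⟩
  · rintro ⟨⟨a, b, hab⟩, huniq⟩
    refine ⟨⟨fun ⟨c, ⟨a₁, ha₁⟩, ⟨b₁, hb₁⟩⟩ ⟨c', ⟨a₂, ha₂⟩, ⟨b₂, hb₂⟩⟩ =>
      Subtype.ext ?_⟩, ⟨⟨_, ⟨a, rfl⟩, ⟨b, Quotient.sound (α.symm' hab)⟩⟩⟩⟩
    have h₁₂ := huniq _ _ _ _ (Quotient.exact (ha₁.trans hb₁.symm))
      (Quotient.exact (ha₂.trans hb₂.symm))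
    exact ha₁.symm.trans ((Quotient.sound h₁₂).trans ha₂)

lemma rnk_rankOne (P Q : Setoid (Fin n)) (a b : Fin n) : rnk (rankOne P Q a b) = 1 :=
  rnk_eq_one_iff.2
    ⟨⟨a, b, P.refl' a, Q.refl' b⟩, fun _ _ _ _ h h' => P.trans' h.1 (P.symm' h'.1)⟩

lemma eq_rankOne_or_eq_rankZero {γ : PM n} {a : Fin n}
    (hcross : ∀ i j, cross γ i j → γ.r (.inl i) (.inl a)) :
    (∃ c, γ = rankOne (upper γ) (lower γ) a c) ∨ γ = rankZero (upper γ) (lower γ) := by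
  by_cases hc : ∃ c, cross γ a c
  · obtain ⟨c, hc⟩ := hc
    refine .inl ⟨c, ?_⟩
    ext (i | i) (j | j) <;> simp only [rankOne_inl_inl, rankOne_inr_inr, rankOne_inl_inr,
      rankOne_inr_inl, upper_apply, lower_apply]
    · have := hcross i j
      grind [cross, Setoid.symm', Setoid.trans']
    · have := hcross j i
      grind [cross, Setoid.symm', Setoid.trans']
  · refine .inr ?_
    ext (i | i) (j | j) <;> simp only [rankZero_inl_inl, rankZero_inr_inr, rankZero_inl_inr,
      rankZero_inr_inl, upper_apply, lower_apply, iff_false]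
    · exact fun h => hc ⟨j, γ.trans' (γ.symm' (hcross i j h)) h⟩
    · exact fun h => hc ⟨i, γ.trans' (γ.symm' (hcross j i (γ.symm' h))) (γ.symm' h)⟩

lemma rnk_eq_one_iff_exists {α : PM n} : rnk α = 1 ↔ ∃ P Q a b, α = rankOne P Q a b := by
  refine ⟨fun h => ?_, fun ⟨P, Q, a, b, h⟩ => h ▸ rnk_rankOne P Q a b⟩
  obtain ⟨⟨a, b, hab⟩, huniq⟩ := rnk_eq_one_iff.1 h
  rcases eq_rankOne_or_eq_rankZero fun i j hij => huniq i j a b hij hab with ⟨c, hc⟩ | hz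
  · exact ⟨_, _, a, c, hc⟩
  · exact absurd (hz ▸ hab : cross (rankZero (upper α) (lower α)) a b) rankZero_inl_inr

end Rank

section Connectivity

variable {α β : PM n} {i j : Fin n}

lemma conn_symm {x y : W n} (h : conn α β x y) : conn α β y x := .symm x y h

lemma conn_trans {x y z : W n} (h : conn α β x y) (h' : conn α β y z) : conn α β x z :=
  .trans x y z h h'

lemma conn_top_top (h : α.r (.inl i) (.inl j)) : conn α β (topV i) (topV j) :=
  .rel _ _ (.inl ⟨.inl i, .inl j, h, rfl, rfl⟩)

lemma conn_top_mid (h : α.r (.inl i) (.inr j)) : conn α β (topV i) (midV j) :=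
  .rel _ _ (.inl ⟨.inl i, .inr j, h, rfl, rfl⟩)

lemma conn_mid_mid_left (h : α.r (.inr i) (.inr j)) : conn α β (midV i) (midV j) :=
  .rel _ _ (.inl ⟨.inr i, .inr j, h, rfl, rfl⟩)

lemma conn_mid_mid_right (h : β.r (.inl i) (.inl j)) : conn α β (midV i) (midV j) :=
  .rel _ _ (.inr ⟨.inl i, .inl j, h, rfl, rfl⟩)

lemma conn_mid_bot (h : β.r (.inl i) (.inr j)) : conn α β (midV i) (botV j) :=
  .rel _ _ (.inr ⟨.inl i, .inr j, h, rfl, rfl⟩)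

lemma conn_bot_bot (h : β.r (.inr i) (.inr j)) : conn α β (botV i) (botV j) :=
  .rel _ _ (.inr ⟨.inr i, .inr j, h, rfl, rfl⟩)

lemma conn_le_of_equivalence {S : W n → W n → Prop} (hS : Equivalence S)
    (hedge : ∀ x y, graphRel α β x y → S x y) {x y : W n} (h : conn α β x y) : S x y :=
  hS.eqvGen_iff.1 (Relation.EqvGen.mono hedge _ _ h)

lemma conn_iff_of_equivalence {S : W n → W n → Prop} (hS : Equivalence S)
    (hedge : ∀ x y, graphRel α β x y → S x y) (hback : ∀ x y, S x y → conn α β x y)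
    {x y : W n} : conn α β x y ↔ S x y :=
  ⟨conn_le_of_equivalence hS hedge, hback x y⟩

lemma pmul_apply (x y : V n) : (pmul α β).r x y ↔ conn α β (topBot x) (topBot y) := Iff.rfl

lemma Phi_eq_zero (h : ∀ j, ∃ x, ¬ isMid x ∧ conn α β x (midV j)) : Phi α β = 0 := by
  rw [Phi, Nat.card_eq_zero]
  left
  refine ⟨fun ⟨c, hc⟩ => ?_⟩
  obtain ⟨w, rfl⟩ := Quotient.exists_rep c
  obtain ⟨j, rfl⟩ := hc w rfl
  obtain ⟨x, hx, hxj⟩ := h j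
  exact hx (hc x (Quotient.sound hxj))

end Connectivity

section Involution

variable {α β : PM n} {P Q : Setoid (Fin n)} {a b : Fin n}

/-- The involution `α ↦ α*` of `P_n`, exchanging primed and unprimed points. -/
def invol (α : PM n) : PM n := α.comap Sum.swap

@[simp] lemma invol_apply (x y : V n) : (invol α).r x y ↔ α.r x.swap y.swap := Iff.rfl

@[simp] lemma invol_invol (α : PM n) : invol (invol α) = α := by
  ext x y
  simp

lemma invol_injective : Function.Injective (invol (n := n)) :=
  Function.LeftInverse.injective invol_invol

@[simp] lemma upper_invol : upper (invol α) = lower α := rfl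
@[simp] lemma lower_invol : lower (invol α) = upper α := rfl

@[simp] lemma invol_rankOne : invol (rankOne P Q a b) = rankOne Q P b a := by
  ext (i | i) (j | j) <;> simp [and_comm]

@[simp] lemma invol_rankZero : invol (rankZero P Q) = rankZero Q P := by
  ext (i | i) (j | j) <;> simp

lemma rnk_invol (h : rnk α = 1) : rnk (invol α) = 1 := by
  obtain ⟨P, Q, a, b, rfl⟩ := rnk_eq_one_iff_exists.1 h
  simpa using rnk_rankOne Q P b a

def flipRows : W n → W n
  | .inl i => .inr (.inr i)
  | .inr (.inl j) => .inr (.inl j)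
  | .inr (.inr k) => .inl k

@[simp] lemma flipRows_flipRows (x : W n) : flipRows (flipRows x) = x := by
  rcases x with i | j | k <;> rfl

lemma flipRows_topMid (u : V n) : flipRows (topMid u) = midBot u.swap := by
  rcases u with i | i <;> rfl

lemma flipRows_midBot (u : V n) : flipRows (midBot u) = topMid u.swap := by
  rcases u with i | i <;> rfl

lemma flipRows_topBot (u : V n) : flipRows (topBot u) = topBot u.swap := by
  rcases u with i | i <;> rfl

lemma isMid_flipRows {x : W n} : isMid (flipRows x) ↔ isMid x := by
  rcases x with i | j | k <;> simp [flipRows, isMid]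

lemma graphRel_invol {x y : W n} (h : graphRel α β x y) :
    graphRel (invol β) (invol α) (flipRows x) (flipRows y) := by
  rcases h with ⟨u, v, huv, rfl, rfl⟩ | ⟨u, v, huv, rfl, rfl⟩
  · exact .inr ⟨u.swap, v.swap, by simpa using huv, flipRows_topMid u, flipRows_topMid v⟩
  · exact .inl ⟨u.swap, v.swap, by simpa using huv, flipRows_midBot u, flipRows_midBot v⟩

lemma conn_invol {x y : W n} (h : conn α β x y) :
    conn (invol β) (invol α) (flipRows x) (flipRows y) :=
  conn_le_of_equivalence ((Relation.EqvGen.is_equivalence _).comap flipRows)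
    (fun _ _ h => .rel _ _ (graphRel_invol h)) h

lemma conn_invol_iff {x y : W n} :
    conn (invol β) (invol α) (flipRows x) (flipRows y) ↔ conn α β x y :=
  ⟨fun h => by simpa using conn_invol h, conn_invol⟩

lemma pmul_invol (α β : PM n) : pmul (invol β) (invol α) = invol (pmul α β) := by
  ext x y
  simpa [pmul_apply, flipRows_topBot] using
    conn_invol_iff (α := α) (β := β) (x := topBot x.swap) (y := topBot y.swap)

lemma Phi_invol (α β : PM n) : Phi (invol β) (invol α) = Phi α β := by
  let e : Quotient (connSetoid α β) ≃ Quotient (connSetoid (invol β) (invol α)) :=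
    Quotient.congr (Function.Involutive.toPerm _ flipRows_flipRows) fun _ _ => conn_invol_iff.symm
  refine (Nat.card_congr (e.subtypeEquiv fun c => ?_)).symm
  induction c using Quotient.ind with
  | _ w =>
    change (∀ x, ⟦x⟧ = ⟦w⟧ → isMid x) ↔ ∀ x, ⟦x⟧ = ⟦flipRows w⟧ → isMid x
    refine ⟨fun h x hx => ?_, fun h x hx => ?_⟩
    · rw [← isMid_flipRows]
      have hx' : conn (invol β) (invol α) x (flipRows w) := Quotient.exact hx
      have hw : conn α β (flipRows x) w := by simpa using conn_invol hx'
      exact h _ (Quotient.sound hw)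
    · rw [← isMid_flipRows]
      exact h _ (Quotient.sound (conn_invol (Quotient.exact hx)))

lemma greenL_iff_greenR_invol :
    greenL (pmul (n := n)) α β ↔ greenR (pmul (n := n)) (invol α) (invol β) := by
  have key : ∀ γ : PM n, Set.range (pmul · γ) = invol '' Set.range (pmul (invol γ)) := by
    intro γ
    ext x
    constructor
    · rintro ⟨d, rfl⟩
      exact ⟨_, ⟨invol d, rfl⟩, by rw [← pmul_invol, invol_invol, invol_invol]⟩
    · rintro ⟨y, ⟨d, rfl⟩, rfl⟩
      exact ⟨invol d, by rw [← pmul_invol, invol_invol]⟩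
  rw [greenL, greenR, key, key, (Set.image_injective.2 invol_injective).eq_iff]

end Involution

section Split

def InClass (Qt : Setoid (Fin n)) (o : Option (Fin n)) (j : Fin n) : Prop :=
  ∃ c, o = some c ∧ Qt.r j c

def splitCross (U : Fin n → Prop) (Qt : Setoid (Fin n)) (oc oc' : Option (Fin n))
    (x j : Fin n) : Prop :=
  (U x ∧ InClass Qt oc j) ∨ (¬ U x ∧ InClass Qt oc' j)

def SplitWF (Qt : Setoid (Fin n)) (oc oc' : Option (Fin n)) : Prop :=
  ∀ c c', oc = some c → oc' = some c' → ¬ Qt.r c c'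

/-- Two upper blocks, `U` and its complement, joined to the lower classes of `oc` and `oc'`
respectively (no transversal for `none`). -/
def split (U : Fin n → Prop) (Qt : Setoid (Fin n)) (oc oc' : Option (Fin n))
    (hwf : SplitWF Qt oc oc') : PM n where
  r
    | .inl x, .inl y => U x ↔ U y
    | .inr j, .inr k => Qt.r j k
    | .inl x, .inr j => splitCross U Qt oc oc' x j
    | .inr j, .inl x => splitCross U Qt oc oc' x j
  iseqv := by
    constructor
    · rintro (i | i) <;> simp only [Setoid.refl', iff_self]
    · rintro (i | i) (j | j) <;> grind [Setoid.symm']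
    · rintro (i | i) (j | j) (k | k) <;> simp only [splitCross, InClass, SplitWF] at * <;>
        grind [Setoid.symm', Setoid.trans']

variable {U : Fin n → Prop} {P Q Qt : Setoid (Fin n)} {oc oc' : Option (Fin n)}
  {hwf : SplitWF Qt oc oc'} {a b c x y j k : Fin n}

@[simp] lemma split_inl_inl :
    (split U Qt oc oc' hwf).r (.inl x) (.inl y) ↔ (U x ↔ U y) := Iff.rfl
@[simp] lemma split_inr_inr : (split U Qt oc oc' hwf).r (.inr j) (.inr k) ↔ Qt.r j k := Iff.rfl
@[simp] lemma split_inl_inr :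
    (split U Qt oc oc' hwf).r (.inl x) (.inr j) ↔ splitCross U Qt oc oc' x j := Iff.rfl
@[simp] lemma split_inr_inl :
    (split U Qt oc oc' hwf).r (.inr j) (.inl x) ↔ splitCross U Qt oc oc' x j := Iff.rfl

lemma inClass_some : InClass Qt (some c) j ↔ Qt.r j c := by simp [InClass]

lemma not_inClass_none : ¬ InClass Qt none j := by simp [InClass]

/-- Connectivity in `Γ(rankOne P Q a b, split U Qt oc oc')` when `U` is a union of `Q`-classes. -/
def splitConnClosed (P : Setoid (Fin n)) (a b : Fin n) (U : Fin n → Prop) (Qt : Setoid (Fin n))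
    (oc oc' : Option (Fin n)) : W n → W n → Prop
  | .inl i, .inl j => P.r i j
  | .inl i, .inr (.inl j) | .inr (.inl j), .inl i => P.r i a ∧ (U j ↔ U b)
  | .inl i, .inr (.inr k) | .inr (.inr k), .inl i => P.r i a ∧ splitCross U Qt oc oc' b k
  | .inr (.inl j), .inr (.inl k) => U j ↔ U k
  | .inr (.inl j), .inr (.inr k) | .inr (.inr k), .inr (.inl j) => splitCross U Qt oc oc' j k
  | .inr (.inr j), .inr (.inr k) => Qt.r j k

lemma splitConnClosed_equivalence (hwf : SplitWF Qt oc oc') :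
    Equivalence (splitConnClosed P a b U Qt oc oc') := by
  constructor
  · rintro (i | j | k) <;> simp [splitConnClosed]
  · rintro (i | j | k) (i' | j' | k') <;> simp only [splitConnClosed] <;> grind [Setoid.symm']
  · rintro (i | j | k) (i' | j' | k') (i'' | j'' | k'') <;>
      simp only [splitConnClosed, splitCross, InClass, SplitWF] at * <;>
      grind [Setoid.symm', Setoid.trans']

lemma conn_rankOne_split_of_closed (hU : ∀ x y, Q.r x y → (U x ↔ U y)) {x y : W n} :
    conn (rankOne P Q a b) (split U Qt oc oc' hwf) x y ↔
      splitConnClosed P a b U Qt oc oc' x y := by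
  have htop : ∀ i, P.r i a → conn (rankOne P Q a b) (split U Qt oc oc' hwf) (topV i) (midV b) :=
    fun i hi => conn_top_mid (by simpa using hi)
  refine conn_iff_of_equivalence (splitConnClosed_equivalence hwf) ?_ ?_
  · rintro x y (⟨u, v, huv, rfl, rfl⟩ | ⟨u, v, huv, rfl, rfl⟩) <;>
      rcases u with i | i <;> rcases v with j | j <;>
      simp only [topMid, midBot, splitConnClosed, rankOne_inl_inl, rankOne_inr_inr,
        rankOne_inl_inr, rankOne_inr_inl, split_inl_inl, split_inr_inr, split_inl_inr,
        split_inr_inl] at huv ⊢ <;>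
      grind
  · rintro (i | j | k) (i' | j' | k') h <;> simp only [splitConnClosed] at h
    · exact conn_top_top h
    · exact conn_trans (htop i h.1) (conn_mid_mid_right (by simpa using h.2.symm))
    · exact conn_trans (htop i h.1) (conn_mid_bot h.2)
    · exact conn_symm (conn_trans (htop i' h.1) (conn_mid_mid_right (by simpa using h.2.symm)))
    · exact conn_mid_mid_right h
    · exact conn_mid_bot h
    · exact conn_symm (conn_trans (htop i' h.1) (conn_mid_bot h.2))
    · exact conn_symm (conn_mid_bot h)
    · exact conn_bot_bot h

lemma pmul_rankOne_split_of_closed (hU : ∀ x y, Q.r x y → (U x ↔ U y))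
    (hc : splitCross U Qt oc oc' b c) :
    pmul (rankOne P Q a b) (split U Qt oc oc' hwf) = rankOne P Qt a c := by
  ext (i | i) (j | j) <;> rw [pmul_apply] <;> simp only [topBot] <;>
    rw [conn_rankOne_split_of_closed hU] <;>
    simp only [splitConnClosed, rankOne_inl_inl, rankOne_inr_inr, rankOne_inl_inr,
      rankOne_inr_inl] <;>
    simp only [splitCross, InClass, SplitWF] at hc hwf ⊢ <;> grind [Setoid.symm', Setoid.trans']

lemma pmul_rankOne_split_of_closed_of_dead (hU : ∀ x y, Q.r x y → (U x ↔ U y))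
    (hc : ∀ k, ¬ splitCross U Qt oc oc' b k) :
    pmul (rankOne P Q a b) (split U Qt oc oc' hwf) = rankZero P Qt := by
  ext (i | i) (j | j) <;> rw [pmul_apply] <;> simp only [topBot] <;>
    rw [conn_rankOne_split_of_closed hU] <;> simp [splitConnClosed, hc]

def Attached (Qt : Setoid (Fin n)) (oc oc' : Option (Fin n)) (k : Fin n) : Prop :=
  InClass Qt oc k ∨ InClass Qt oc' k

def mergeAttached (Qt : Setoid (Fin n)) (oc oc' : Option (Fin n)) : Setoid (Fin n) where
  r j k := Qt.r j k ∨ (Attached Qt oc oc' j ∧ Attached Qt oc oc' k)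
  iseqv := by
    constructor
    · exact fun j => .inl (Qt.refl' j)
    · grind [Setoid.symm']
    · simp only [Attached, InClass]
      grind [Setoid.symm', Setoid.trans']

@[simp] lemma mergeAttached_apply :
    (mergeAttached Qt oc oc').r j k ↔
      Qt.r j k ∨ (Attached Qt oc oc' j ∧ Attached Qt oc oc' k) :=
  Iff.rfl

lemma mergeAttached_none : mergeAttached Qt none (some c) = Qt := by
  ext j k
  simp only [mergeAttached_apply, Attached, InClass]
  grind [Setoid.symm', Setoid.trans']

/-- Connectivity in `Γ(rankOne P Q a b, split U Qt oc oc')` when some `Q`-class meets both `U` and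
its complement: then the whole middle row is one connected piece. -/
def splitConnStraddle (P : Setoid (Fin n)) (a : Fin n) (Qt : Setoid (Fin n))
    (oc oc' : Option (Fin n)) : W n → W n → Prop
  | .inl i, .inl j => P.r i j
  | .inl i, .inr (.inl _) | .inr (.inl _), .inl i => P.r i a
  | .inl i, .inr (.inr k) | .inr (.inr k), .inl i => P.r i a ∧ Attached Qt oc oc' k
  | .inr (.inl _), .inr (.inl _) => True
  | .inr (.inl _), .inr (.inr k) | .inr (.inr k), .inr (.inl _) => Attached Qt oc oc' k
  | .inr (.inr j), .inr (.inr k) => (mergeAttached Qt oc oc').r j k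

lemma splitConnStraddle_equivalence : Equivalence (splitConnStraddle P a Qt oc oc') := by
  constructor
  · rintro (i | j | k) <;> simp [splitConnStraddle]
  · rintro (i | j | k) (i' | j' | k') <;> simp only [splitConnStraddle, mergeAttached_apply] <;>
      grind [Setoid.symm']
  · rintro (i | j | k) (i' | j' | k') (i'' | j'' | k'') <;>
      simp only [splitConnStraddle, mergeAttached_apply, Attached, InClass] <;>
      grind [Setoid.symm', Setoid.trans']

lemma conn_rankOne_split_of_straddle (hstr : ∃ u v, Q.r u v ∧ U u ∧ ¬ U v) {x y : W n} :
    conn (rankOne P Q a b) (split U Qt oc oc' hwf) x y ↔ splitConnStraddle P a Qt oc oc' x y := by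
  obtain ⟨u, v, huv, hu, hv⟩ := hstr
  have hmid_u : ∀ j, conn (rankOne P Q a b) (split U Qt oc oc' hwf) (midV j) (midV u) := by
    intro j
    by_cases hj : U j
    · exact conn_mid_mid_right (by simp [hj, hu])
    · exact conn_trans (conn_mid_mid_right (show (split U Qt oc oc' hwf).r (.inl j) (.inl v) by
        simp [hj, hv])) (conn_mid_mid_left (by simpa using Q.symm' huv))
  have hmid : ∀ j k, conn (rankOne P Q a b) (split U Qt oc oc' hwf) (midV j) (midV k) :=
    fun j k => conn_trans (hmid_u j) (conn_symm (hmid_u k))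
  have hbot : ∀ j k, Attached Qt oc oc' k →
      conn (rankOne P Q a b) (split U Qt oc oc' hwf) (midV j) (botV k) := by
    rintro j k (hk | hk)
    · exact conn_trans (hmid j u) (conn_mid_bot (by simp [splitCross, hu, hk]))
    · exact conn_trans (hmid j v) (conn_mid_bot (by simp [splitCross, hv, hk]))
  have htop : ∀ i j, P.r i a →
      conn (rankOne P Q a b) (split U Qt oc oc' hwf) (topV i) (midV j) :=
    fun i j hi => conn_trans (conn_top_mid (by simpa using hi)) (hmid b j)
  refine conn_iff_of_equivalence splitConnStraddle_equivalence ?_ ?_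
  · rintro x y (⟨w, z, hwz, rfl, rfl⟩ | ⟨w, z, hwz, rfl, rfl⟩) <;>
      rcases w with i | i <;> rcases z with j | j <;>
      simp only [topMid, midBot, splitConnStraddle, mergeAttached_apply, Attached, splitCross,
        rankOne_inl_inl, rankOne_inr_inr, rankOne_inl_inr, rankOne_inr_inl, split_inl_inl,
        split_inr_inr, split_inl_inr, split_inr_inl] at hwz ⊢ <;>
      grind
  · rintro (i | j | k) (i' | j' | k') h <;> simp only [splitConnStraddle] at h
    · exact conn_top_top h
    · exact htop i j' h
    · exact conn_trans (htop i b h.1) (hbot b k' h.2)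
    · exact conn_symm (htop i' j h)
    · exact hmid j j'
    · exact hbot j k' h
    · exact conn_symm (conn_trans (htop i' b h.1) (hbot b k h.2))
    · exact conn_symm (hbot j' k h)
    · rcases h with h | ⟨h₁, h₂⟩
      · exact conn_bot_bot h
      · exact conn_trans (conn_symm (hbot u k h₁)) (hbot u k' h₂)

lemma pmul_rankOne_split_of_straddle (hstr : ∃ u v, Q.r u v ∧ U u ∧ ¬ U v)
    (hc : Attached Qt oc oc' c) :
    pmul (rankOne P Q a b) (split U Qt oc oc' hwf) = rankOne P (mergeAttached Qt oc oc') a c := by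
  ext (i | i) (j | j) <;> rw [pmul_apply] <;> simp only [topBot] <;>
    rw [conn_rankOne_split_of_straddle hstr] <;>
    simp only [splitConnStraddle, rankOne_inl_inl, rankOne_inr_inr, rankOne_inl_inr,
      rankOne_inr_inl, mergeAttached_apply] <;>
    simp only [Attached, InClass] at hc ⊢ <;> grind [Setoid.symm', Setoid.trans']

/-- Connectivity in `Γ(rankZero P Q, split U Qt oc oc')` when `U` is a union of `Q`-classes. -/
def splitConnZero (P : Setoid (Fin n)) (U : Fin n → Prop) (Qt : Setoid (Fin n))
    (oc oc' : Option (Fin n)) : W n → W n → Prop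
  | .inl i, .inl j => P.r i j
  | .inl _, .inr _ | .inr _, .inl _ => False
  | .inr (.inl j), .inr (.inl k) => U j ↔ U k
  | .inr (.inl j), .inr (.inr k) | .inr (.inr k), .inr (.inl j) => splitCross U Qt oc oc' j k
  | .inr (.inr j), .inr (.inr k) => Qt.r j k

lemma splitConnZero_equivalence (hwf : SplitWF Qt oc oc') :
    Equivalence (splitConnZero P U Qt oc oc') := by
  constructor
  · rintro (i | j | k) <;> simp [splitConnZero]
  · rintro (i | j | k) (i' | j' | k') <;> simp only [splitConnZero] <;> grind [Setoid.symm']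
  · rintro (i | j | k) (i' | j' | k') (i'' | j'' | k'') <;>
      simp only [splitConnZero, splitCross, InClass, SplitWF] at * <;>
      grind [Setoid.symm', Setoid.trans']

lemma conn_rankZero_split_of_closed (hU : ∀ x y, Q.r x y → (U x ↔ U y)) {x y : W n} :
    conn (rankZero P Q) (split U Qt oc oc' hwf) x y ↔ splitConnZero P U Qt oc oc' x y := by
  refine conn_iff_of_equivalence (splitConnZero_equivalence hwf) ?_ ?_
  · rintro x y (⟨u, v, huv, rfl, rfl⟩ | ⟨u, v, huv, rfl, rfl⟩) <;>
      rcases u with i | i <;> rcases v with j | j <;>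
      simp only [topMid, midBot, splitConnZero, rankZero_inl_inl, rankZero_inr_inr,
        rankZero_inl_inr, rankZero_inr_inl, split_inl_inl, split_inr_inr, split_inl_inr,
        split_inr_inl] at huv ⊢ <;>
      grind
  · rintro (i | j | k) (i' | j' | k') h <;> simp only [splitConnZero] at h
    · exact conn_top_top h
    all_goals first
      | exact h.elim
      | exact conn_mid_mid_right h
      | exact conn_mid_bot h
      | exact conn_symm (conn_mid_bot h)
      | exact conn_bot_bot h

lemma pmul_rankZero_split_of_closed (hU : ∀ x y, Q.r x y → (U x ↔ U y)) :
    pmul (rankZero P Q) (split U Qt oc oc' hwf) = rankZero P Qt := by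
  ext (i | i) (j | j) <;> rw [pmul_apply] <;> simp only [topBot] <;>
    rw [conn_rankZero_split_of_closed hU] <;> simp [splitConnZero]

end Split

section Multipliers

variable {U : Fin n → Prop} {P Q Qt : Setoid (Fin n)} {oc oc' : Option (Fin n)}
  {hwf : SplitWF Qt oc oc'} {a b c c' : Fin n}

lemma not_isMid_botV (k : Fin n) : ¬ isMid (botV k) := by simp [isMid]

lemma Phi_split_of_some (h : oc = some c) (h' : oc' = some c') (γ : PM n) :
    Phi γ (split U Qt oc oc' hwf) = 0 := by
  refine Phi_eq_zero fun j => ?_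
  by_cases hj : U j
  · exact ⟨botV c, not_isMid_botV c,
      conn_symm (conn_mid_bot (by simp [splitCross, InClass, hj, h]))⟩
  · exact ⟨botV c', not_isMid_botV c',
      conn_symm (conn_mid_bot (by simp [splitCross, InClass, hj, h']))⟩

lemma Phi_rankOne_split_of_straddle (hstr : ∃ u v, Q.r u v ∧ U u ∧ ¬ U v)
    (h' : oc' = some c) :
    Phi (rankOne P Q a b) (split U Qt oc oc' hwf) = 0 :=
  Phi_eq_zero fun _ => ⟨botV c, not_isMid_botV c, (conn_rankOne_split_of_straddle hstr).2
    (by simp [splitConnStraddle, Attached, InClass, h'])⟩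

lemma Phi_rankOne_split_of_mem (hb : U b) (h' : oc' = some c) :
    Phi (rankOne P Q a b) (split U Qt oc oc' hwf) = 0 := by
  refine Phi_eq_zero fun j => ?_
  by_cases hj : U j
  · exact ⟨topV a, by simp [isMid], conn_trans (conn_top_mid (by simp))
      (conn_mid_mid_right (show (split U Qt oc oc' hwf).r (.inl b) (.inl j) by simp [hb, hj]))⟩
  · exact ⟨botV c, not_isMid_botV c,
      conn_symm (conn_mid_bot (by simp [splitCross, InClass, hj, h']))⟩

lemma splitWF_none (Qt : Setoid (Fin n)) (oc' : Option (Fin n)) : SplitWF Qt none oc' :=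
  fun _ _ h _ => nomatch h

def funnel (Qt : Setoid (Fin n)) (c : Fin n) : PM n :=
  split (fun _ => False) Qt none (some c) (splitWF_none Qt _)

lemma pmul_rankOne_funnel : pmul (rankOne P Q a b) (funnel Qt c) = rankOne P Qt a c :=
  pmul_rankOne_split_of_closed (fun _ _ _ => Iff.rfl) (by simp [splitCross, inClass_some])

lemma Phi_funnel (γ : PM n) : Phi γ (funnel Qt c) = 0 :=
  Phi_eq_zero fun _ => ⟨botV c, not_isMid_botV c,
    conn_symm (conn_mid_bot (by rw [funnel]; simp [splitCross, inClass_some]))⟩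

lemma pmul_invol_funnel_rankOne :
    pmul (invol (funnel Qt c)) (rankOne P Q a b) = rankOne Qt Q c b := by
  rw [← invol_invol (rankOne P Q a b), invol_rankOne, pmul_invol, pmul_rankOne_funnel,
    invol_rankOne]

lemma Phi_invol_funnel (γ : PM n) : Phi (invol (funnel Qt c)) γ = 0 := by
  rw [← invol_invol γ, Phi_invol, Phi_funnel]

end Multipliers

section Green

variable {P Q P' Q' : Setoid (Fin n)} {a b a' b' : Fin n} {α β : PM n}

/-- An upper bound for connectivity in `Γ(α, β)` when the upper blocks of `α` are `P` and its
transversals all pass through the `P`-class of `o` (no transversal when `o = none`). -/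
def connBound (P : Setoid (Fin n)) (o : Option (Fin n)) : W n → W n → Prop
  | .inl i, .inl j => P.r i j
  | .inl i, .inr _ | .inr _, .inl i => InClass P o i
  | .inr _, .inr _ => True

lemma connBound_equivalence (o : Option (Fin n)) : Equivalence (connBound P o) := by
  constructor
  · rintro (i | u) <;> simp [connBound]
  · rintro (i | u) (j | v) <;> simp only [connBound] <;> grind [Setoid.symm']
  · rintro (i | u) (j | v) (k | w) <;> simp only [connBound, InClass] <;>
      grind [Setoid.symm', Setoid.trans']

lemma conn_rankOne_le {x y : W n} (h : conn (rankOne P Q a b) β x y) :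
    connBound P (some a) x y := by
  refine conn_le_of_equivalence (connBound_equivalence _) ?_ h
  rintro x y (⟨u, v, huv, rfl, rfl⟩ | ⟨u, v, huv, rfl, rfl⟩) <;>
    rcases u with i | i <;> rcases v with j | j <;>
    simp_all [topMid, midBot, connBound, inClass_some]

lemma conn_rankZero_le {x y : W n} (h : conn (rankZero P Q) β x y) : connBound P none x y := by
  refine conn_le_of_equivalence (connBound_equivalence _) ?_ h
  rintro x y (⟨u, v, huv, rfl, rfl⟩ | ⟨u, v, huv, rfl, rfl⟩) <;>
    rcases u with i | i <;> rcases v with j | j <;>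
    simp_all [topMid, midBot, connBound]

lemma upper_pmul_rankOne : upper (pmul (rankOne P Q a b) β) = P := by
  ext i j
  exact ⟨fun h => conn_rankOne_le (x := topV i) (y := topV j) h, fun h => conn_top_top h⟩

lemma upper_pmul_rankZero : upper (pmul (rankZero P Q) β) = P := by
  ext i j
  exact ⟨fun h => conn_rankZero_le (x := topV i) (y := topV j) h, fun h => conn_top_top h⟩

lemma pmul_rankOne_eq (β : PM n) :
    (∃ c, pmul (rankOne P Q a b) β = rankOne P (lower (pmul (rankOne P Q a b) β)) a c) ∨
      pmul (rankOne P Q a b) β = rankZero P (lower (pmul (rankOne P Q a b) β)) := by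
  have hcross : ∀ i j, cross (pmul (rankOne P Q a b) β) i j →
      (upper (pmul (rankOne P Q a b) β)).r i a := fun i j h => by
    rw [upper_pmul_rankOne]
    exact inClass_some.1 (conn_rankOne_le (x := topV i) (y := botV j) h)
  simpa only [upper_pmul_rankOne] using eq_rankOne_or_eq_rankZero hcross

lemma pmul_rankZero_eq (β : PM n) :
    pmul (rankZero P Q) β = rankZero P (lower (pmul (rankZero P Q) β)) := by
  ext (i | i) (j | j)
  · rw [← upper_apply, upper_pmul_rankZero]
    rfl
  · exact iff_of_false
      (fun h => not_inClass_none (conn_rankZero_le (x := topV i) (y := botV j) h)) id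
  · exact iff_of_false
      (fun h => not_inClass_none (conn_rankZero_le (x := botV i) (y := topV j) h)) id
  · rfl

/-- `rankZero ⊤ R`, written as a split so that the product formulas apply. -/
def sink (R : Setoid (Fin n)) : PM n := split (fun _ => False) R none none (splitWF_none R _)

lemma range_pmul_rankOne :
    Set.range (pmul (rankOne P Q a b)) =
      {γ | (∃ R c, γ = rankOne P R a c) ∨ ∃ R, γ = rankZero P R} := by
  ext γ
  constructor
  · rintro ⟨β, rfl⟩
    rcases pmul_rankOne_eq (P := P) (Q := Q) (a := a) (b := b) β with ⟨c, h⟩ | h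
    · exact .inl ⟨_, c, h⟩
    · exact .inr ⟨_, h⟩
  · rintro (⟨R, c, rfl⟩ | ⟨R, rfl⟩)
    · exact ⟨funnel R c, pmul_rankOne_funnel⟩
    · exact ⟨sink R, pmul_rankOne_split_of_closed_of_dead (fun _ _ _ => Iff.rfl)
        (by simp [splitCross, InClass])⟩

lemma range_pmul_rankZero : Set.range (pmul (rankZero P Q)) = {γ | ∃ R, γ = rankZero P R} := by
  ext γ
  constructor
  · rintro ⟨β, rfl⟩
    exact ⟨_, pmul_rankZero_eq β⟩
  · rintro ⟨R, rfl⟩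
    exact ⟨sink R, pmul_rankZero_split_of_closed fun _ _ _ => Iff.rfl⟩

lemma greenR_rankOne_iff :
    greenR pmul (rankOne P Q a b) (rankOne P' Q' a' b') ↔ P = P' ∧ P.r a a' := by
  rw [greenR, range_pmul_rankOne, range_pmul_rankOne]
  constructor
  · intro h
    have hmem :
        rankOne P Q a b ∈ {γ | (∃ R c, γ = rankOne P R a c) ∨ ∃ R, γ = rankZero P R} :=
      .inl ⟨Q, b, rfl⟩
    rw [h] at hmem
    rcases hmem with ⟨R, c, hR⟩ | ⟨R, hR⟩
    · obtain ⟨hP, -, ha, -⟩ := rankOne_eq_rankOne_iff.1 hR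
      exact ⟨hP, ha⟩
    · exact absurd hR rankOne_ne_rankZero
  · rintro ⟨rfl, ha⟩
    simp only [rankOne_congr ha (Setoid.refl' _ _)]

lemma greenR_rankZero_iff : greenR pmul (rankZero P Q) (rankZero P' Q') ↔ P = P' := by
  rw [greenR, range_pmul_rankZero, range_pmul_rankZero]
  constructor
  · intro h
    have hmem : rankZero P Q ∈ {γ | ∃ R, γ = rankZero P R} := ⟨Q, rfl⟩
    rw [h] at hmem
    obtain ⟨R, hR⟩ := hmem
    exact (rankZero_eq_rankZero_iff.1 hR).1
  · rintro rfl
    rfl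

lemma greenL_rankOne_iff :
    greenL pmul (rankOne P Q a b) (rankOne P' Q' a' b') ↔ Q = Q' ∧ Q.r b b' := by
  rw [greenL_iff_greenR_invol, invol_rankOne, invol_rankOne, greenR_rankOne_iff]

lemma greenR_hat_iff : greenR pmul (hat α) (hat β) ↔ upper α = upper β := by
  rw [hat_eq_rankZero, hat_eq_rankZero, greenR_rankZero_iff]

lemma greenL_hat_iff : greenL pmul (hat α) (hat β) ↔ lower α = lower β := by
  rw [greenL_iff_greenR_invol, hat_eq_rankZero, hat_eq_rankZero, invol_rankZero, invol_rankZero,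
    greenR_rankZero_iff]

lemma eq_of_greenR_of_greenL (hα : rnk α = 1) (hβ : rnk β = 1) (hR : greenR pmul α β)
    (hL : greenL pmul α β) : α = β := by
  obtain ⟨P, Q, a, b, rfl⟩ := rnk_eq_one_iff_exists.1 hα
  obtain ⟨P', Q', a', b', rfl⟩ := rnk_eq_one_iff_exists.1 hβ
  obtain ⟨hP, ha⟩ := greenR_rankOne_iff.1 hR
  obtain ⟨hQ, hb⟩ := greenL_rankOne_iff.1 hL
  exact rankOne_eq_rankOne_iff.2 ⟨hP, hQ, ha, hb⟩

lemma greenR_invol_iff : greenR pmul (invol α) (invol β) ↔ greenL pmul α β :=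
  greenL_iff_greenR_invol.symm

lemma greenL_invol_iff : greenL pmul (invol α) (invol β) ↔ greenR pmul α β := by
  rw [greenL_iff_greenR_invol, invol_invol, invol_invol]

lemma hat_invol_eq_iff : hat (invol α) = hat (invol β) ↔ hat α = hat β := by
  simp only [hat_eq_hat_iff, upper_invol, lower_invol, and_comm]

end Green

section Congruence

variable {σ : (ℕ × PM n) → (ℕ × PM n) → Prop} {i : ℕ} {α β : PM n}
  {P Q P' Q' : Setoid (Fin n)} {a b a' b' : Fin n}

lemma IsCongruence.pmul_right (hσ : IsCongruence tmul σ) (h : σ (i, α) (i, β)) {δ : PM n}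
    (hα : Phi α δ = 0) (hβ : Phi β δ = 0) : σ (i, pmul α δ) (i, pmul β δ) := by
  simpa [tmul, hα, hβ] using (hσ.2 (i, α) (i, β) (0, δ) h).2

lemma IsCongruence.pmul_left (hσ : IsCongruence tmul σ) (h : σ (i, α) (i, β)) {δ : PM n}
    (hα : Phi δ α = 0) (hβ : Phi δ β = 0) : σ (i, pmul δ α) (i, pmul δ β) := by
  simpa [tmul, hα, hβ] using (hσ.2 (i, α) (i, β) (0, δ) h).1

lemma IsCongruence.rankOne_setUpper (hσ : IsCongruence tmul σ)
    (h : σ (i, rankOne P Q a b) (i, rankOne P' Q' a' b')) (Pt : Setoid (Fin n)) (c : Fin n) :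
    σ (i, rankOne Pt Q c b) (i, rankOne Pt Q' c b') := by
  simpa only [pmul_invol_funnel_rankOne] using
    hσ.pmul_left h (Phi_invol_funnel _) (Phi_invol_funnel _)

/-- Transport of a relation on `P_n^Φ` along the anti-automorphism `(i, α) ↦ (i, α*)`. -/
def involRel (σ : (ℕ × PM n) → (ℕ × PM n) → Prop) (x y : ℕ × PM n) : Prop :=
  σ (x.1, invol x.2) (y.1, invol y.2)

lemma tmul_invol (x y : ℕ × PM n) :
    ((tmul x y).1, invol (tmul x y).2) = tmul (y.1, invol y.2) (x.1, invol x.2) := by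
  simp only [tmul, Phi_invol, pmul_invol, Nat.add_comm x.1 y.1]

lemma isCongruence_involRel (hσ : IsCongruence tmul σ) : IsCongruence tmul (involRel σ) := by
  refine ⟨⟨fun _ => hσ.1.refl _, hσ.1.symm, hσ.1.trans⟩, fun x y a h => ⟨?_, ?_⟩⟩
  · change σ ((tmul a x).1, invol (tmul a x).2) ((tmul a y).1, invol (tmul a y).2)
    rw [tmul_invol, tmul_invol]
    exact (hσ.2 _ _ _ h).2
  · change σ ((tmul x a).1, invol (tmul x a).2) ((tmul y a).1, invol (tmul y a).2)
    rw [tmul_invol, tmul_invol]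
    exact (hσ.2 _ _ _ h).1

lemma IsCongruence.rankOne_lower_transversal (hσ : IsCongruence tmul σ)
    (h : σ (i, rankOne P Q a b) (i, rankOne P Q a b')) (hb : ¬ Q.r b b')
    (P' Qt : Setoid (Fin n)) (a' c c' : Fin n) :
    σ (i, rankOne P' Qt a' c) (i, rankOne P' Qt a' c') := by
  by_cases hcc : Qt.r c c'
  · rw [rankOne_congr (P'.refl' a') hcc]
    exact hσ.1.refl _
  have hwf : SplitWF Qt (some c') (some c) := by
    simp only [SplitWF, Option.some.injEq]
    rintro _ _ rfl rfl h
    exact hcc (Qt.symm' h)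
  have hU : ∀ u v, Q.r u v → (Q.r u b' ↔ Q.r v b') := fun u v huv =>
    ⟨Q.trans' (Q.symm' huv), Q.trans' huv⟩
  have := hσ.pmul_right (hσ.rankOne_setUpper h P' a') (δ := split (Q.r · b') Qt _ _ hwf)
    (Phi_split_of_some rfl rfl _) (Phi_split_of_some rfl rfl _)
  rwa [pmul_rankOne_split_of_closed hU (c := c) (by simp [splitCross, inClass_some, hb]),
    pmul_rankOne_split_of_closed hU (c := c') (by simp [splitCross, inClass_some])] at this

end Congruence

section LowerChange

variable {σ : (ℕ × PM n) → (ℕ × PM n) → Prop} {i : ℕ}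
  {P₀ P₀' Q Q' Qt : Setoid (Fin n)} {a₀ a₀' b b' c c' x y : Fin n}

lemma exists_closed_straddle (hxy : Q.r x y) (hxy' : ¬ Q'.r x y) (b' : Fin n) :
    ∃ U : Fin n → Prop, (∀ u v, Q'.r u v → (U u ↔ U v)) ∧ U b' ∧
      ∃ u v, Q.r u v ∧ U u ∧ ¬ U v := by
  have hU : ∀ u v, Q'.r u v → (Q'.r u x ↔ Q'.r v x) := fun u v huv =>
    ⟨Q'.trans' (Q'.symm' huv), Q'.trans' huv⟩
  by_cases hb : Q'.r b' x
  · exact ⟨(Q'.r · x), hU, hb, x, y, hxy, Q'.refl' x, fun h => hxy' (Q'.symm' h)⟩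
  · exact ⟨(¬ Q'.r · x), fun u v huv => not_congr (hU u v huv), hb, y, x, Q.symm' hxy,
      fun h => hxy' (Q'.symm' h), not_not.2 (Q'.refl' x)⟩

/-- Right multiplication by a split whose upper blocks are `Q'`-closed but cut a `Q`-class
merges two lower classes on one side only. -/
lemma IsCongruence.rankOne_merge (hσ : IsCongruence tmul σ)
    (h : σ (i, rankOne P₀ Q a₀ b) (i, rankOne P₀' Q' a₀' b'))
    (hxy : Q.r x y) (hxy' : ¬ Q'.r x y)
    (P : Setoid (Fin n)) (a : Fin n) (hcc : ¬ Qt.r c c') :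
    σ (i, rankOne P (mergeAttached Qt (some c) (some c')) a c) (i, rankOne P Qt a c) := by
  obtain ⟨U, hU, hb', hstr⟩ := exists_closed_straddle hxy hxy' b'
  have hwf : SplitWF Qt (some c) (some c') := by
    simp only [SplitWF, Option.some.injEq]
    rintro _ _ rfl rfl
    exact hcc
  have := hσ.pmul_right (hσ.rankOne_setUpper h P a) (δ := split U Qt _ _ hwf)
    (Phi_split_of_some rfl rfl _) (Phi_split_of_some rfl rfl _)
  rwa [pmul_rankOne_split_of_straddle hstr (c := c) (.inl (inClass_some.2 (Qt.refl' c))),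
    pmul_rankOne_split_of_closed hU (c := c) (.inl ⟨hb', inClass_some.2 (Qt.refl' c)⟩)] at this

lemma IsCongruence.rankOne_lower_top (hσ : IsCongruence tmul σ)
    (h : σ (i, rankOne P₀ Q a₀ b) (i, rankOne P₀' Q' a₀' b'))
    (hxy : Q.r x y) (hxy' : ¬ Q'.r x y)
    (P Qt : Setoid (Fin n)) (a c : Fin n) : σ (i, rankOne P Qt a c) (i, rankOne P ⊤ a c) := by
  classical
  induction hm : (Finset.univ.filter fun j => ¬ Qt.r j c).card using Nat.strong_induction_on
    generalizing Qt with
  | _ m ih =>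
  by_cases hall : ∀ j, Qt.r j c
  · obtain rfl : Qt = ⊤ := by
      ext j k
      simpa using Qt.trans' (hall j) (Qt.symm' (hall k))
    exact hσ.1.refl _
  push Not at hall
  obtain ⟨c', hc'⟩ := hall
  refine hσ.1.trans (hσ.1.symm (hσ.rankOne_merge h hxy hxy' P a (c' := c')
    fun h => hc' (Qt.symm' h))) (ih _ ?_ _ rfl)
  rw [← hm]
  refine Finset.card_lt_card ((Finset.ssubset_iff_of_subset ?_).2 ⟨c', by simpa using hc', ?_⟩)
  · intro j
    simp only [Finset.mem_filter, Finset.mem_univ, true_and, mergeAttached_apply, not_or]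
    exact And.left
  · simp [Attached, inClass_some]

lemma IsCongruence.rankOne_rankZero (hσ : IsCongruence tmul σ)
    (h : σ (i, rankOne P₀ Q a₀ b) (i, rankOne P₀' Q' a₀' b'))
    (hxy : Q.r x y) (hxy' : ¬ Q'.r x y)
    (P Qt : Setoid (Fin n)) (a c : Fin n) : σ (i, rankOne P Qt a c) (i, rankZero P Qt) := by
  obtain ⟨U, hU, hb', hstr⟩ := exists_closed_straddle hxy hxy' b'
  have := hσ.pmul_right (hσ.rankOne_setUpper h P a)
    (δ := split U Qt none (some c) (splitWF_none _ _))
    (Phi_rankOne_split_of_straddle hstr rfl) (Phi_rankOne_split_of_mem hb' rfl)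
  rwa [pmul_rankOne_split_of_straddle hstr (c := c) (.inr (inClass_some.2 (Qt.refl' c))),
    mergeAttached_none, pmul_rankOne_split_of_closed_of_dead hU
      (by simp [splitCross, hb', not_inClass_none])] at this

/-- Merging lower classes two at a time leads from any `Qt` to `⊤`, and killing the transversal
leads to `rankZero P Qt`; both moves stay inside the `σ`-class. -/
lemma IsCongruence.rankOne_of_upper (hσ : IsCongruence tmul σ)
    (h : σ (i, rankOne P₀ Q a₀ b) (i, rankOne P₀' Q' a₀' b'))
    (hxy : Q.r x y) (hxy' : ¬ Q'.r x y)
    (P Qt Qt' : Setoid (Fin n)) (a c a' c' : Fin n) :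
    σ (i, rankOne P Qt a c) (i, rankOne P Qt' a' c') := by
  have h₁ := hσ.rankOne_lower_top h hxy hxy' P Qt a c
  have h₂ := hσ.rankOne_lower_top h hxy hxy' P Qt' a c'
  rw [rankOne_congr (P.refl' a) (show (⊤ : Setoid (Fin n)).r c c' from trivial)] at h₁
  exact hσ.1.trans (hσ.1.trans h₁ (hσ.1.symm h₂)) (hσ.1.trans
    (hσ.rankOne_rankZero h hxy hxy' P Qt' a c')
    (hσ.1.symm (hσ.rankOne_rankZero h hxy hxy' P Qt' a' c')))

end LowerChange

section Classification

variable {σ : (ℕ × PM n) → (ℕ × PM n) → Prop} {i : ℕ} {α β α₀ β₀ : PM n}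

/-- The restriction `σ_{1i}` of `σ` to `D_1` at level `i`. -/
def rowRel (σ : (ℕ × PM n) → (ℕ × PM n) → Prop) (i : ℕ) (α β : PM n) : Prop :=
  rnk α = 1 ∧ rnk β = 1 ∧ σ (i, α) (i, β)

lemma rowRel_involRel (h : rowRel σ i α β) : rowRel (involRel σ) i (invol α) (invol β) :=
  ⟨rnk_invol h.1, rnk_invol h.2.1, by simpa [involRel] using h.2.2⟩

lemma IsCongruence.rel_of_upper_eq (hσ : IsCongruence tmul σ) (h₀ : rowRel σ i α₀ β₀)
    (hne : lower α₀ ≠ lower β₀) (hα : rnk α = 1) (hβ : rnk β = 1) (h : upper α = upper β) :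
    σ (i, α) (i, β) := by
  obtain ⟨hα₀, hβ₀, h₀⟩ := h₀
  obtain ⟨P₀, Q₀, a₀, b₀, rfl⟩ := rnk_eq_one_iff_exists.1 hα₀
  obtain ⟨P₀', Q₀', a₀', b₀', rfl⟩ := rnk_eq_one_iff_exists.1 hβ₀
  obtain ⟨P, Q, a, b, rfl⟩ := rnk_eq_one_iff_exists.1 hα
  obtain ⟨P', Q', a', b', rfl⟩ := rnk_eq_one_iff_exists.1 hβ
  simp only [upper_rankOne, lower_rankOne] at h hne
  subst h
  obtain ⟨x, y, hxy⟩ : ∃ x y, ¬ (Q₀.r x y ↔ Q₀'.r x y) := by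
    by_contra! hall
    exact hne (Setoid.ext hall)
  by_cases hx : Q₀.r x y
  · exact hσ.rankOne_of_upper h₀ hx (fun h => hxy (iff_of_true hx h)) _ _ _ _ _ _ _
  · exact hσ.rankOne_of_upper (hσ.1.symm h₀) (by tauto) hx _ _ _ _ _ _ _

lemma IsCongruence.rel_of_lower_eq (hσ : IsCongruence tmul σ) (h₀ : rowRel σ i α₀ β₀)
    (hne : upper α₀ ≠ upper β₀) (hα : rnk α = 1) (hβ : rnk β = 1) (h : lower α = lower β) :
    σ (i, α) (i, β) := by
  simpa [involRel] using (isCongruence_involRel hσ).rel_of_upper_eq (rowRel_involRel h₀)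
    (by simpa using hne) (rnk_invol hα) (rnk_invol hβ) (by simpa using h)

lemma IsCongruence.rel_of_greenR (hσ : IsCongruence tmul σ) (h₀ : rowRel σ i α₀ β₀)
    (hhat₀ : hat α₀ = hat β₀) (hL : ¬ greenL pmul α₀ β₀) (hα : rnk α = 1) (hβ : rnk β = 1)
    (hhat : hat α = hat β) (hR : greenR pmul α β) : σ (i, α) (i, β) := by
  obtain ⟨hα₀, hβ₀, h₀⟩ := h₀
  obtain ⟨P₀, Q₀, a₀, b₀, rfl⟩ := rnk_eq_one_iff_exists.1 hα₀
  obtain ⟨P₀', Q₀', a₀', b₀', rfl⟩ := rnk_eq_one_iff_exists.1 hβ₀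
  obtain ⟨P, Q, a, b, rfl⟩ := rnk_eq_one_iff_exists.1 hα
  obtain ⟨P', Q', a', b', rfl⟩ := rnk_eq_one_iff_exists.1 hβ
  simp only [hat_eq_hat_iff, upper_rankOne, lower_rankOne] at hhat₀ hhat
  obtain ⟨rfl, rfl⟩ := hhat₀
  obtain ⟨rfl, rfl⟩ := hhat
  rw [← rankOne_congr (greenR_rankOne_iff.1 hR).2 (Q.refl' b')]
  exact hσ.rankOne_lower_transversal (hσ.rankOne_setUpper h₀ P₀ a₀)
    (fun hb => hL (greenL_rankOne_iff.2 ⟨rfl, hb⟩)) _ _ _ _ _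

lemma IsCongruence.rel_of_greenL (hσ : IsCongruence tmul σ) (h₀ : rowRel σ i α₀ β₀)
    (hhat₀ : hat α₀ = hat β₀) (hR : ¬ greenR pmul α₀ β₀) (hα : rnk α = 1) (hβ : rnk β = 1)
    (hhat : hat α = hat β) (hL : greenL pmul α β) : σ (i, α) (i, β) := by
  simpa [involRel] using (isCongruence_involRel hσ).rel_of_greenR (rowRel_involRel h₀)
    (hat_invol_eq_iff.2 hhat₀) (by rwa [greenL_invol_iff]) (rnk_invol hα) (rnk_invol hβ)
    (hat_invol_eq_iff.2 hhat) (greenR_invol_iff.2 hL)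

lemma rowRel_eq_of {X : PM n → PM n → Prop} (hle : ∀ α β, rowRel σ i α β → X α β)
    (hge : ∀ α β, rnk α = 1 → rnk β = 1 → X α β → σ (i, α) (i, β)) :
    rowRel σ i = fun α β => rnk α = 1 ∧ rnk β = 1 ∧ X α β :=
  funext₂ fun α β => propext ⟨fun h => ⟨h.1, h.2.1, hle α β h⟩,
    fun ⟨hα, hβ, h⟩ => ⟨hα, hβ, hge α β hα hβ h⟩⟩

lemma IsCongruence.rowRel_eq_top (hσ : IsCongruence tmul σ)
    (hup : ∃ α β, rowRel σ i α β ∧ upper α ≠ upper β)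
    (hlo : ∃ α β, rowRel σ i α β ∧ lower α ≠ lower β) :
    rowRel σ i = fun α β => rnk α = 1 ∧ rnk β = 1 := by
  obtain ⟨α₀, β₀, h₀, hne⟩ := hup
  obtain ⟨α₁, β₁, h₁, hne'⟩ := hlo
  refine funext₂ fun α β =>
    propext ⟨fun h => ⟨h.1, h.2.1⟩, fun ⟨hα, hβ⟩ => ⟨hα, hβ, ?_⟩⟩
  obtain ⟨P, Q, a, b, rfl⟩ := rnk_eq_one_iff_exists.1 hα
  obtain ⟨P', Q', a', b', rfl⟩ := rnk_eq_one_iff_exists.1 hβ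
  exact hσ.1.trans (hσ.rel_of_upper_eq h₁ hne' hα (rnk_rankOne P Q' a b') rfl)
    (hσ.rel_of_lower_eq h₀ hne (rnk_rankOne P Q' a b') hβ rfl)

lemma IsCongruence.rowRel_eq_greenR_hat (hσ : IsCongruence tmul σ)
    (hup : ¬ ∃ α β, rowRel σ i α β ∧ upper α ≠ upper β)
    (hlo : ∃ α β, rowRel σ i α β ∧ lower α ≠ lower β) :
    rowRel σ i = fun α β => rnk α = 1 ∧ rnk β = 1 ∧ greenR pmul (hat α) (hat β) := by
  obtain ⟨α₀, β₀, h₀, hne⟩ := hlo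
  refine rowRel_eq_of (fun α β h => greenR_hat_iff.2 ?_)
    fun α β hα hβ h => hσ.rel_of_upper_eq h₀ hne hα hβ (greenR_hat_iff.1 h)
  by_contra hne'
  exact hup ⟨α, β, h, hne'⟩

lemma IsCongruence.rowRel_eq_greenL_hat (hσ : IsCongruence tmul σ)
    (hup : ∃ α β, rowRel σ i α β ∧ upper α ≠ upper β)
    (hlo : ¬ ∃ α β, rowRel σ i α β ∧ lower α ≠ lower β) :
    rowRel σ i = fun α β => rnk α = 1 ∧ rnk β = 1 ∧ greenL pmul (hat α) (hat β) := by
  obtain ⟨α₀, β₀, h₀, hne⟩ := hup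
  refine rowRel_eq_of (fun α β h => greenL_hat_iff.2 ?_)
    fun α β hα hβ h => hσ.rel_of_lower_eq h₀ hne hα hβ (greenL_hat_iff.1 h)
  by_contra hne'
  exact hlo ⟨α, β, h, hne'⟩

lemma IsCongruence.rowRel_eq_hat_eq (hσ : IsCongruence tmul σ)
    (hhat : ∀ α β, rowRel σ i α β → hat α = hat β)
    (hR : ∃ α β, rowRel σ i α β ∧ ¬ greenR pmul α β)
    (hL : ∃ α β, rowRel σ i α β ∧ ¬ greenL pmul α β) :
    rowRel σ i = fun α β => rnk α = 1 ∧ rnk β = 1 ∧ hat α = hat β := by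
  obtain ⟨α₀, β₀, h₀, hR₀⟩ := hR
  obtain ⟨α₁, β₁, h₁, hL₁⟩ := hL
  refine rowRel_eq_of hhat fun α β hα hβ h => ?_
  obtain ⟨P, Q, a, b, rfl⟩ := rnk_eq_one_iff_exists.1 hα
  obtain ⟨P', Q', a', b', rfl⟩ := rnk_eq_one_iff_exists.1 hβ
  obtain ⟨rfl, rfl⟩ : P = P' ∧ Q = Q' := by simpa [hat_eq_hat_iff] using h
  exact hσ.1.trans
    (hσ.rel_of_greenR h₁ (hhat _ _ h₁) hL₁ hα (rnk_rankOne P Q a b')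
      (by simp [hat_eq_hat_iff])
      (greenR_rankOne_iff.2 ⟨rfl, P.refl' a⟩))
    (hσ.rel_of_greenL h₀ (hhat _ _ h₀) hR₀ (rnk_rankOne P Q a b') hβ
      (by simp [hat_eq_hat_iff])
      (greenL_rankOne_iff.2 ⟨rfl, Q.refl' b'⟩))

lemma IsCongruence.rowRel_eq_muDown (hσ : IsCongruence tmul σ)
    (hhat : ∀ α β, rowRel σ i α β → hat α = hat β)
    (hR : ∃ α β, rowRel σ i α β ∧ ¬ greenR pmul α β)
    (hL : ¬ ∃ α β, rowRel σ i α β ∧ ¬ greenL pmul α β) :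
    rowRel σ i = fun α β =>
      rnk α = 1 ∧ rnk β = 1 ∧ hat α = hat β ∧ greenL pmul α β := by
  obtain ⟨α₀, β₀, h₀, hR₀⟩ := hR
  refine rowRel_eq_of (fun α β h => ⟨hhat α β h, ?_⟩)
    fun α β hα hβ h => hσ.rel_of_greenL h₀ (hhat _ _ h₀) hR₀ hα hβ h.1 h.2
  by_contra hL'
  exact hL ⟨α, β, h, hL'⟩

lemma IsCongruence.rowRel_eq_muUp (hσ : IsCongruence tmul σ)
    (hhat : ∀ α β, rowRel σ i α β → hat α = hat β)
    (hR : ¬ ∃ α β, rowRel σ i α β ∧ ¬ greenR pmul α β)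
    (hL : ∃ α β, rowRel σ i α β ∧ ¬ greenL pmul α β) :
    rowRel σ i = fun α β =>
      rnk α = 1 ∧ rnk β = 1 ∧ hat α = hat β ∧ greenR pmul α β := by
  obtain ⟨α₀, β₀, h₀, hL₀⟩ := hL
  refine rowRel_eq_of (fun α β h => ⟨hhat α β h, ?_⟩)
    fun α β hα hβ h => hσ.rel_of_greenR h₀ (hhat _ _ h₀) hL₀ hα hβ h.1 h.2
  by_contra hR'
  exact hR ⟨α, β, h, hR'⟩

lemma IsCongruence.rowRel_eq_eq (hσ : IsCongruence tmul σ)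
    (hR : ¬ ∃ α β, rowRel σ i α β ∧ ¬ greenR pmul α β)
    (hL : ¬ ∃ α β, rowRel σ i α β ∧ ¬ greenL pmul α β) :
    rowRel σ i = fun α β => rnk α = 1 ∧ rnk β = 1 ∧ α = β := by
  refine rowRel_eq_of (fun α β h => eq_of_greenR_of_greenL h.1 h.2.1 ?_ ?_)
    fun α β _ _ h => h ▸ hσ.1.refl _
  · by_contra hR'
    exact hR ⟨α, β, h, hR'⟩
  · by_contra hL'
    exact hL ⟨α, β, h, hL'⟩

end Classification

theorem row1_restrictions_general (n : ℕ)
    (σ : (ℕ × PM n) → (ℕ × PM n) → Prop) (hσ : IsCongruence (tmul (n := n)) σ)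
    (i : ℕ) (s : PM n → PM n → Prop)
    (hs : s = fun α β => rnk α = 1 ∧ rnk β = 1 ∧ σ (i, α) (i, β)) :
    s = (fun α β => rnk α = 1 ∧ rnk β = 1 ∧ α = β) ∨
    s = (fun α β => rnk α = 1 ∧ rnk β = 1 ∧ hat α = hat β ∧ greenR (pmul (n := n)) α β) ∨
    s = (fun α β => rnk α = 1 ∧ rnk β = 1 ∧ hat α = hat β ∧ greenL (pmul (n := n)) α β) ∨
    s = (fun α β => rnk α = 1 ∧ rnk β = 1 ∧ hat α = hat β) ∨
    s = (fun α β => rnk α = 1 ∧ rnk β = 1 ∧ greenR (pmul (n := n)) (hat α) (hat β)) ∨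
    s = (fun α β => rnk α = 1 ∧ rnk β = 1 ∧ greenL (pmul (n := n)) (hat α) (hat β)) ∨
    s = (fun α β => rnk α = 1 ∧ rnk β = 1) := by
  obtain rfl : s = rowRel σ i := hs
  by_cases hup : ∃ α β, rowRel σ i α β ∧ upper α ≠ upper β <;>
    by_cases hlo : ∃ α β, rowRel σ i α β ∧ lower α ≠ lower β
  · exact .inr <| .inr <| .inr <| .inr <| .inr <| .inr <| hσ.rowRel_eq_top hup hlo
  · exact .inr <| .inr <| .inr <| .inr <| .inr <| .inl <| hσ.rowRel_eq_greenL_hat hup hlo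
  · exact .inr <| .inr <| .inr <| .inr <| .inl <| hσ.rowRel_eq_greenR_hat hup hlo
  have hhat : ∀ α β, rowRel σ i α β → hat α = hat β := fun α β h => hat_eq_hat_iff.2
    ⟨not_not.1 fun hne => hup ⟨α, β, h, hne⟩,
      not_not.1 fun hne => hlo ⟨α, β, h, hne⟩⟩
  by_cases hR : ∃ α β, rowRel σ i α β ∧ ¬ greenR pmul α β <;>
    by_cases hL : ∃ α β, rowRel σ i α β ∧ ¬ greenL pmul α β
  · exact .inr <| .inr <| .inr <| .inl <| hσ.rowRel_eq_hat_eq hhat hR hL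
  · exact .inr <| .inr <| .inl <| hσ.rowRel_eq_muDown hhat hR hL
  · exact .inr <| .inl <| hσ.rowRel_eq_muUp hhat hR hL
  · exact .inl <| hσ.rowRel_eq_eq hR hL

/-- For a congruence `σ` on `P_n^Φ` and `i ∈ ℕ`, the restriction
`σ_{1i}` to `D_{1i}` is one of seven relations on `D_1`: equality, `μ↑`, `μ↓`,
`μ = {α̂ = β̂}`, `{α̂ R β̂}`, `{α̂ L β̂}`, or `D_1 × D_1`. -/
theorem row1_restrictions (n : ℕ) (hn : 1 ≤ n)
    (σ : (ℕ × PM n) → (ℕ × PM n) → Prop) (hσ : IsCongruence (tmul (n := n)) σ)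
    (i : ℕ) (s : PM n → PM n → Prop)
    (hs : s = fun α β => rnk α = 1 ∧ rnk β = 1 ∧ σ (i, α) (i, β)) :
    s = (fun α β => rnk α = 1 ∧ rnk β = 1 ∧ α = β) ∨
    s = (fun α β => rnk α = 1 ∧ rnk β = 1 ∧ hat α = hat β ∧ greenR (pmul (n := n)) α β) ∨
    s = (fun α β => rnk α = 1 ∧ rnk β = 1 ∧ hat α = hat β ∧ greenL (pmul (n := n)) α β) ∨
    s = (fun α β => rnk α = 1 ∧ rnk β = 1 ∧ hat α = hat β) ∨
    s = (fun α β => rnk α = 1 ∧ rnk β = 1 ∧ greenR (pmul (n := n)) (hat α) (hat β)) ∨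
    s = (fun α β => rnk α = 1 ∧ rnk β = 1 ∧ greenL (pmul (n := n)) (hat α) (hat β)) ∨
    s = (fun α β => rnk α = 1 ∧ rnk β = 1) :=
  row1_restrictions_general n σ hσ i s hs

end TPM
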